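/- Let d ≥ 2 and let Z : ℝ^d → ℝ^d be twice continuously differentiable such that there is a function φ : ℝ^d → ℝ with fderiv ℝ Z x = φ(x) • id for every x ∈ ℝ^d. Then φ is constant, and there exist c ∈ ℝ and Z₀ ∈ ℝ^d such that Z x = c • x + Z₀ for all x; that is, every closed conformal vector field on a semi-Euclidean space of dimension at least 2 is either parallel (c = 0) or radial. -/

import Mathlib

/-!
Differentiating `D Z = φ • id` once more and using the symmetry of the second derivative gives
`Dφ(x) v • w = Dφ(x) w • v` for all `v, w`; taking `v, w` linearly independent, which is possible
as soon as the dimension is at least 2, forces `Dφ = 0`. Hence `φ` is a constant `c`, and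
`Z - c • id` has zero derivative, so it is constant as well.
-/

theorem LinearMap.eq_zero_of_forall_smul_eq_smul {R M : Type*} [CommRing R] [IsDomain R]
    [StrongRankCondition R] [AddCommGroup M] [Module R M] [Module.IsTorsionFree R M]
    (hM : 1 < Module.rank R M) (ℓ : M →ₗ[R] R) (hℓ : ∀ v w, ℓ v • w = ℓ w • v) : ℓ = 0 := by
  ext v
  rcases eq_or_ne v 0 with rfl | hv
  · exact map_zero ℓ
  obtain ⟨w, hvw⟩ := exists_linearIndependent_pair_of_one_lt_rank hM hv
  exact (LinearIndependent.pair_iff.mp hvw (-ℓ w) (ℓ v)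
    (by rw [hℓ v w, neg_smul, neg_add_cancel])).2

section ConformalFactor

variable {𝕜 E X : Type*} [RCLike 𝕜] [NormedAddCommGroup E] [NormedSpace 𝕜 E]
  [NormedAddCommGroup X] [NormedSpace 𝕜 X]

theorem DifferentiableAt.of_smul_id [Nontrivial E] {φ : X → 𝕜} {x : X}
    (h : DifferentiableAt 𝕜 (fun y ↦ φ y • ContinuousLinearMap.id 𝕜 E) x) :
    DifferentiableAt 𝕜 φ x := by
  obtain ⟨v, hv⟩ := exists_ne (0 : E)
  obtain ⟨ℓ, hℓ⟩ := SeparatingDual.exists_eq_one (R := 𝕜) hv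
  have hφ : φ = fun y ↦ ℓ ((φ y • ContinuousLinearMap.id 𝕜 E) v) := by
    funext y
    simp [hℓ]
  rw [hφ]
  exact ℓ.differentiableAt.comp x (h.clm_apply (differentiableAt_const v))

theorem fderiv_smul_comm_of_hasFDerivAt_smul_id {Z : E → E} {φ : E → 𝕜}
    (hZ : ∀ y, HasFDerivAt Z (φ y • ContinuousLinearMap.id 𝕜 E) y) {x : E}
    (hφ : DifferentiableAt 𝕜 φ x) (v w : E) :
    fderiv 𝕜 φ x v • w = fderiv 𝕜 φ x w • v := by
  simpa using second_derivative_symmetric hZ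
    (hφ.hasFDerivAt.smul_const (ContinuousLinearMap.id 𝕜 E)) v w

theorem conformalFactor_eq_of_hasFDerivAt_smul_id (hE : 1 < Module.rank 𝕜 E) {Z : E → E}
    {φ : E → 𝕜} (hZ : ∀ y, HasFDerivAt Z (φ y • ContinuousLinearMap.id 𝕜 E) y)
    (hφ : Differentiable 𝕜 φ) (x y : E) : φ x = φ y := by
  refine is_const_of_fderiv_eq_zero hφ (fun z ↦ ?_) x y
  apply ContinuousLinearMap.coe_injective
  exact LinearMap.eq_zero_of_forall_smul_eq_smul hE _
    (fderiv_smul_comm_of_hasFDerivAt_smul_id hZ (hφ z))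

theorem eq_smul_add_of_hasFDerivAt_smul_id {Z : E → E} {c : 𝕜}
    (hZ : ∀ y, HasFDerivAt Z (c • ContinuousLinearMap.id 𝕜 E) y) (x : E) :
    Z x = c • x + Z 0 := by
  have hderiv : ∀ y, HasFDerivAt (fun y ↦ Z y - c • y) 0 y := fun y ↦ by
    rw [← sub_self (c • ContinuousLinearMap.id 𝕜 E)]
    exact (hZ y).sub ((hasFDerivAt_id (𝕜 := 𝕜) y).const_smul c)
  have h := is_const_of_fderiv_eq_zero (fun y ↦ (hderiv y).differentiableAt)
    (fun y ↦ (hderiv y).fderiv) x 0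
  rwa [smul_zero, sub_zero, sub_eq_iff_eq_add'] at h

end ConformalFactor

theorem cc_field_euclidean_parallel_or_radial {d : ℕ} (hd : 2 ≤ d)
    (Z : EuclideanSpace ℝ (Fin d) → EuclideanSpace ℝ (Fin d))
    (φ : EuclideanSpace ℝ (Fin d) → ℝ)
    (hZ : ContDiff ℝ 2 Z)
    (hCC : ∀ x, fderiv ℝ Z x = φ x • ContinuousLinearMap.id ℝ (EuclideanSpace ℝ (Fin d))) :
    ∃ (c : ℝ) (Z₀ : EuclideanSpace ℝ (Fin d)),
      (∀ x, φ x = c) ∧ (∀ x, Z x = c • x + Z₀) := by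
  have hE : 1 < Module.rank ℝ (EuclideanSpace ℝ (Fin d)) := by
    rw [← Module.finrank_eq_rank, finrank_euclideanSpace_fin]
    exact_mod_cast hd
  have : Nontrivial (EuclideanSpace ℝ (Fin d)) := rank_pos_iff_nontrivial.mp (zero_lt_one.trans hE)
  have hZ' : ∀ x, HasFDerivAt Z (φ x • ContinuousLinearMap.id ℝ _) x := fun x ↦
    hCC x ▸ (hZ.differentiable (by norm_num) x).hasFDerivAt
  have hφ : Differentiable ℝ φ := fun x ↦ .of_smul_id <| funext hCC ▸
    (hZ.fderiv_right (m := 1) (by norm_num)).differentiable (by norm_num) x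
  have hφc : ∀ x, φ x = φ 0 := fun x ↦ conformalFactor_eq_of_hasFDerivAt_smul_id hE hZ' hφ x 0
  exact ⟨φ 0, Z 0, hφc, eq_smul_add_of_hasFDerivAt_smul_id fun x ↦ hφc x ▸ hZ' x⟩
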